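/- Let P be an algebra of S-probabilities all of whose elements take only the values 0 and 1 (a concrete logic), assume P is not a Boolean algebra of S-probabilities, let P̄ be its 0,1-extension on S̄, and let q̄ be an S̄-probability taking only the values 0 and 1 with q̄ ∉ P̄. Then P̄ is not a Boolean algebra of S̄-probabilities, and there exists a Boolean algebra Q of S̄-probabilities with P̄ ∪ {q̄} ⊆ Q (namely the set of all {0,1}-valued functions on S̄); hence q̄ is critical. -/

import Mathlib

/-- An `S`-probability: a function `p : S → ℝ` with `0 ≤ p s ≤ 1` for all `s`. -/
def IsProb (S : Type*) (p : S → ℝ) : Prop := ∀ s, 0 ≤ p s ∧ p s ≤ 1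

/-- An algebra of `S`-probabilities: a set of `S`-probabilities containing the constant `0`,
closed under `p ↦ 1 - p`, and containing `p + q + r` for pairwise orthogonal `p, q, r`
(where `p ⊥ q` means `p ≤ 1 - q`). -/
def IsAlg (S : Type*) (P : Set (S → ℝ)) : Prop :=
  (∀ p ∈ P, IsProb S p) ∧
  (0 : S → ℝ) ∈ P ∧
  (∀ p ∈ P, 1 - p ∈ P) ∧
  ∀ p q r : S → ℝ, p ∈ P → q ∈ P → r ∈ P →
    p ≤ 1 - q → q ≤ 1 - r → r ≤ 1 - p → p + q + r ∈ P

/-- A function `p : S → ℝ` is varying if it is neither everywhere `≤ 1/2`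
nor everywhere `≥ 1/2`. -/
def Varying (S : Type*) (p : S → ℝ) : Prop :=
  ¬(∀ s, p s ≤ 1 / 2) ∧ ¬(∀ s, 1 / 2 ≤ p s)

/-- `m` is the infimum of `p` and `q` within the poset `(P, ≤)`. -/
def IsInfIn (S : Type*) (P : Set (S → ℝ)) (p q m : S → ℝ) : Prop :=
  m ∈ P ∧ m ≤ p ∧ m ≤ q ∧ ∀ u ∈ P, u ≤ p → u ≤ q → u ≤ m

/-- `j` is the supremum of `p` and `q` within the poset `(P, ≤)`. -/
def IsSupIn (S : Type*) (P : Set (S → ℝ)) (p q j : S → ℝ) : Prop :=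
  j ∈ P ∧ p ≤ j ∧ q ≤ j ∧ ∀ u ∈ P, p ≤ u → q ≤ u → j ≤ u

/-- A Boolean algebra of `S`-probabilities: an algebra of `S`-probabilities in which any two
elements have an infimum and a supremum within `(P, ≤)`, the resulting lattice is distributive,
and for every `p ∈ P` the infimum of `p` and `1 - p` is `0` and their supremum is `1`. -/
def IsBooleanAlg (S : Type*) (P : Set (S → ℝ)) : Prop :=
  IsAlg S P ∧
  (∀ p ∈ P, ∀ q ∈ P, (∃ m, IsInfIn S P p q m) ∧ (∃ j, IsSupIn S P p q j)) ∧
  (∀ p ∈ P, ∀ q ∈ P, ∀ r ∈ P, ∀ qr a pq pr b : S → ℝ,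
    IsSupIn S P q r qr → IsInfIn S P p qr a →
    IsInfIn S P p q pq → IsInfIn S P p r pr → IsSupIn S P pq pr b → a = b) ∧
  ∀ p ∈ P, IsInfIn S P p (1 - p) 0 ∧ IsSupIn S P p (1 - p) 1

/-- The extension `(p, c)` of `p : S → ℝ` to `S̄ = S ∪ {s̄}` (modelled as `Option S`,
with `none` playing the role of the new state `s̄`), taking the value `c` at `s̄`. -/
def extFun {S : Type*} (p : S → ℝ) (c : ℝ) : Option S → ℝ :=
  fun x => Option.elim x c p

/-- The `0,1`-extension `P̄ = {(p,0) : p ∈ P} ∪ {(p,1) : p ∈ P}` of a set `P` of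
`S`-probabilities. -/
def extSet {S : Type*} (P : Set (S → ℝ)) : Set (Option S → ℝ) :=
  {f | ∃ p ∈ P, f = extFun p 0 ∨ f = extFun p 1}

/-- `p` and `q` are partially reciprocal below `1/2`. -/
def PRBelow (S : Type*) (p q : S → ℝ) : Prop := ∀ s, min (p s) (q s) ≤ 1 / 2

/-- `p` and `q` are partially reciprocal above `1/2`. -/
def PRAbove (S : Type*) (p q : S → ℝ) : Prop := ∀ s, 1 / 2 ≤ max (p s) (q s)

/-- `p` and `q` are reciprocal. -/
def Reciprocal (S : Type*) (p q : S → ℝ) : Prop := PRBelow S p q ∧ PRAbove S p q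

/-- Two functions are incomparable in the pointwise order. -/
def Incomp {S : Type*} (a b : S → ℝ) : Prop := ¬a ≤ b ∧ ¬b ≤ a

/-- An algebra of `S`-probabilities of type `MO₂`,
with the six pairwise distinct elements `0, p₁, 1 - p₁, p₂, 1 - p₂, 1` such that
`p₁, 1 - p₁, p₂, 1 - p₂` are pairwise incomparable. -/
def IsMO2 (S : Type*) (P : Set (S → ℝ)) (p1 p2 : S → ℝ) : Prop :=
  IsAlg S P ∧
  P = {0, p1, 1 - p1, p2, 1 - p2, 1} ∧
  ([(0 : S → ℝ), p1, 1 - p1, p2, 1 - p2, 1].Pairwise (· ≠ ·)) ∧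
  Incomp p1 (1 - p1) ∧ Incomp p1 p2 ∧ Incomp p1 (1 - p2) ∧
  Incomp (1 - p1) p2 ∧ Incomp (1 - p1) (1 - p2) ∧ Incomp p2 (1 - p2)

/-- `f` is an atom of `P`: a minimal element of `P \ {0}`. -/
def IsAtomOf (S : Type*) (P : Set (S → ℝ)) (f : S → ℝ) : Prop :=
  f ∈ P ∧ f ≠ 0 ∧ ∀ g ∈ P, g ≠ 0 → g ≤ f → g = f

/-!
Restricting to `S` and testing against the two extensions `(u, 0)` and `(u, 1)` of each `u ∈ P`
turns infima, suprema, complements and the distributive law in `P̄` into the same data in `P`,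
so `P̄` can be Boolean only if `P` is. All `{0,1}`-valued functions form a Boolean algebra, whose
lattice operations are pointwise `min` and `max`, and it contains `P̄` as soon as `P` is a concrete
logic.
-/

section InfSup

variable {T : Type*} {Q : Set (T → ℝ)} {p q : T → ℝ}

lemma IsInfIn.unique {m m' : T → ℝ} (h : IsInfIn T Q p q m) (h' : IsInfIn T Q p q m') :
    m = m' :=
  le_antisymm (h'.2.2.2 m h.1 h.2.1 h.2.2.1) (h.2.2.2 m' h'.1 h'.2.1 h'.2.2.1)

lemma IsSupIn.unique {j j' : T → ℝ} (h : IsSupIn T Q p q j) (h' : IsSupIn T Q p q j') :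
    j = j' :=
  le_antisymm (h.2.2.2 j' h'.1 h'.2.1 h'.2.2.1) (h'.2.2.2 j h.1 h.2.1 h.2.2.1)

lemma isInfIn_inf (h : p ⊓ q ∈ Q) : IsInfIn T Q p q (p ⊓ q) :=
  ⟨h, inf_le_left, inf_le_right, fun _ _ hp hq => le_inf hp hq⟩

lemma isSupIn_sup (h : p ⊔ q ∈ Q) : IsSupIn T Q p q (p ⊔ q) :=
  ⟨h, le_sup_left, le_sup_right, fun _ _ hp hq => sup_le hp hq⟩

/-- Infima and suprema in `Q` are then pointwise, so distributivity is inherited from `T → ℝ`. -/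
lemma isBooleanAlg_of_sublattice (hQ : IsAlg T Q)
    (hinf : ∀ p ∈ Q, ∀ q ∈ Q, p ⊓ q ∈ Q) (hsup : ∀ p ∈ Q, ∀ q ∈ Q, p ⊔ q ∈ Q)
    (hcompl : ∀ p ∈ Q, p ⊓ (1 - p) = 0 ∧ p ⊔ (1 - p) = 1) : IsBooleanAlg T Q := by
  refine ⟨hQ, fun p hp q hq => ⟨⟨_, isInfIn_inf (hinf p hp q hq)⟩,
    ⟨_, isSupIn_sup (hsup p hp q hq)⟩⟩, ?_, fun p hp => ?_⟩
  · intro p hp q hq r hr qr a pq pr b hqr ha hpq hpr hb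
    obtain rfl := (isSupIn_sup (hsup q hq r hr)).unique hqr
    obtain rfl := (isInfIn_inf (hinf p hp q hq)).unique hpq
    obtain rfl := (isInfIn_inf (hinf p hp r hr)).unique hpr
    rw [← (isInfIn_inf (hinf p hp _ hqr.1)).unique ha,
      ← (isSupIn_sup (hsup _ hpq.1 _ hpr.1)).unique hb]
    exact inf_sup_left _ _ _
  · have h1p := hQ.2.2.1 p hp
    obtain ⟨hi, hs⟩ := hcompl p hp
    exact ⟨by simpa only [hi] using isInfIn_inf (hinf p hp _ h1p),
      by simpa only [hs] using isSupIn_sup (hsup p hp _ h1p)⟩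

end InfSup

section ZeroOne

variable (T : Type*)

lemma isAlg_zeroOne : IsAlg T {f : T → ℝ | ∀ x, f x = 0 ∨ f x = 1} := by
  refine ⟨fun f hf x => ?_, fun _ => Or.inl rfl, fun f hf x => ?_, ?_⟩
  · rcases hf x with h | h <;> simp [h]
  · rcases hf x with h | h <;> simp [h]
  · intro p q r hp hq hr hpq hqr hrp x
    have o1 := hpq x
    have o2 := hqr x
    have o3 := hrp x
    simp only [Pi.sub_apply, Pi.one_apply] at o1 o2 o3
    simp only [Pi.add_apply]
    rcases hp x with h1 | h1 <;> rcases hq x with h2 | h2 <;> rcases hr x with h3 | h3 <;>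
      simp only [h1, h2, h3] at o1 o2 o3 ⊢ <;> revert o1 o2 o3 <;> norm_num

lemma isBooleanAlg_zeroOne : IsBooleanAlg T {f : T → ℝ | ∀ x, f x = 0 ∨ f x = 1} := by
  refine isBooleanAlg_of_sublattice (isAlg_zeroOne T) ?_ ?_ fun p hp => ⟨?_, ?_⟩
  · intro p hp q hq x
    rcases hp x with h | h <;> rcases hq x with h' | h' <;> simp [h, h']
  · intro p hp q hq x
    rcases hp x with h | h <;> rcases hq x with h' | h' <;> simp [h, h']
  · funext x
    rcases hp x with h | h <;> simp [h]
  · funext x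
    rcases hp x with h | h <;> simp [h]

end ZeroOne

section Extension

variable {S : Type*} {P : Set (S → ℝ)} {p q : S → ℝ} {c d : ℝ}

lemma eq_extFun (f : Option S → ℝ) : f = extFun (f ∘ some) (f none) := by
  funext x
  cases x <;> rfl

lemma extFun_le_extFun_iff : extFun p c ≤ extFun q d ↔ p ≤ q ∧ c ≤ d :=
  ⟨fun h => ⟨fun s => h (some s), h none⟩, fun ⟨hpq, hcd⟩ x => by cases x; exacts [hcd, hpq _]⟩

lemma one_sub_extFun : (1 : Option S → ℝ) - extFun p c = extFun (1 - p) (1 - c) := by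
  funext x
  cases x <;> rfl

lemma mem_extSet_iff {f : Option S → ℝ} :
    f ∈ extSet P ↔ f ∘ some ∈ P ∧ (f none = 0 ∨ f none = 1) := by
  constructor
  · rintro ⟨p, hp, rfl | rfl⟩
    exacts [⟨hp, Or.inl rfl⟩, ⟨hp, Or.inr rfl⟩]
  · rintro ⟨hf, h | h⟩
    exacts [⟨_, hf, Or.inl (h ▸ eq_extFun f)⟩, ⟨_, hf, Or.inr (h ▸ eq_extFun f)⟩]

lemma extFun_mem_extSet (hp : p ∈ P) (hc : c = 0 ∨ c = 1) : extFun p c ∈ extSet P :=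
  mem_extSet_iff.2 ⟨hp, hc⟩

lemma extSet_subset_zeroOne (h01 : ∀ p ∈ P, ∀ s, p s = 0 ∨ p s = 1) :
    extSet P ⊆ {f : Option S → ℝ | ∀ x, f x = 0 ∨ f x = 1} := by
  intro f hf x
  obtain ⟨hrestr, hnone⟩ := mem_extSet_iff.1 hf
  cases x with
  | none => exact hnone
  | some s => exact h01 _ hrestr s

lemma isAlg_of_extSet (h : IsAlg (Option S) (extSet P)) : IsAlg S P := by
  obtain ⟨hprob, hzero, hcompl, hsum⟩ := h
  have extFun_zero_orth {p q : S → ℝ} (hpq : p ≤ 1 - q) : extFun p 0 ≤ 1 - extFun q 0 := by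
    rw [one_sub_extFun, extFun_le_extFun_iff]
    exact ⟨hpq, by norm_num⟩
  refine ⟨fun p hp s => hprob _ (extFun_mem_extSet hp (Or.inr rfl)) (some s),
    (mem_extSet_iff.1 hzero).1, fun p hp => ?_, fun p q r hp hq hr hpq hqr hrp => ?_⟩
  · exact (mem_extSet_iff.1 (hcompl _ (extFun_mem_extSet hp (Or.inr rfl)))).1
  · exact (mem_extSet_iff.1 (hsum _ _ _ (extFun_mem_extSet hp (Or.inl rfl))
      (extFun_mem_extSet hq (Or.inl rfl)) (extFun_mem_extSet hr (Or.inl rfl))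
      (extFun_zero_orth hpq) (extFun_zero_orth hqr) (extFun_zero_orth hrp))).1

lemma IsInfIn.restrict {m : Option S → ℝ} (hc : 0 ≤ c) (hd : 0 ≤ d)
    (h : IsInfIn (Option S) (extSet P) (extFun p c) (extFun q d) m) :
    IsInfIn S P p q (m ∘ some) := by
  refine ⟨(mem_extSet_iff.1 h.1).1, fun s => h.2.1 (some s), fun s => h.2.2.1 (some s),
    fun u hu hup huq s => ?_⟩
  exact h.2.2.2 _ (extFun_mem_extSet hu (Or.inl rfl)) (extFun_le_extFun_iff.2 ⟨hup, hc⟩)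
    (extFun_le_extFun_iff.2 ⟨huq, hd⟩) (some s)

lemma IsSupIn.restrict {j : Option S → ℝ} (hc : c ≤ 1) (hd : d ≤ 1)
    (h : IsSupIn (Option S) (extSet P) (extFun p c) (extFun q d) j) :
    IsSupIn S P p q (j ∘ some) := by
  refine ⟨(mem_extSet_iff.1 h.1).1, fun s => h.2.1 (some s), fun s => h.2.2.1 (some s),
    fun u hu hpu hqu s => ?_⟩
  exact h.2.2.2 _ (extFun_mem_extSet hu (Or.inr rfl)) (extFun_le_extFun_iff.2 ⟨hpu, hc⟩)
    (extFun_le_extFun_iff.2 ⟨hqu, hd⟩) (some s)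

lemma IsInfIn.extFun_one {m : S → ℝ} (h : IsInfIn S P p q m) :
    IsInfIn (Option S) (extSet P) (extFun p 1) (extFun q 1) (extFun m 1) := by
  refine ⟨extFun_mem_extSet h.1 (Or.inr rfl), extFun_le_extFun_iff.2 ⟨h.2.1, le_rfl⟩,
    extFun_le_extFun_iff.2 ⟨h.2.2.1, le_rfl⟩, fun u hu hup huq => ?_⟩
  rw [eq_extFun u] at hup huq ⊢
  obtain ⟨hup, hc⟩ := extFun_le_extFun_iff.1 hup
  exact extFun_le_extFun_iff.2
    ⟨h.2.2.2 _ (mem_extSet_iff.1 hu).1 hup (extFun_le_extFun_iff.1 huq).1, hc⟩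

lemma IsSupIn.extFun_one {j : S → ℝ} (h : IsSupIn S P p q j) :
    IsSupIn (Option S) (extSet P) (extFun p 1) (extFun q 1) (extFun j 1) := by
  refine ⟨extFun_mem_extSet h.1 (Or.inr rfl), extFun_le_extFun_iff.2 ⟨h.2.1, le_rfl⟩,
    extFun_le_extFun_iff.2 ⟨h.2.2.1, le_rfl⟩, fun u hu hpu hqu => ?_⟩
  rw [eq_extFun u] at hpu hqu ⊢
  obtain ⟨hpu, hc⟩ := extFun_le_extFun_iff.1 hpu
  exact extFun_le_extFun_iff.2
    ⟨h.2.2.2 _ (mem_extSet_iff.1 hu).1 hpu (extFun_le_extFun_iff.1 hqu).1, hc⟩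

lemma isBooleanAlg_of_extSet (h : IsBooleanAlg (Option S) (extSet P)) : IsBooleanAlg S P := by
  obtain ⟨halg, hlat, hdist, hcompl⟩ := h
  have mem_one {p : S → ℝ} (hp : p ∈ P) : extFun p 1 ∈ extSet P :=
    extFun_mem_extSet hp (Or.inr rfl)
  refine ⟨isAlg_of_extSet halg, fun p hp q hq => ?_, ?_, fun p hp => ?_⟩
  · obtain ⟨⟨m, hm⟩, ⟨j, hj⟩⟩ := hlat _ (mem_one hp) _ (mem_one hq)
    exact ⟨⟨_, hm.restrict zero_le_one zero_le_one⟩, ⟨_, hj.restrict le_rfl le_rfl⟩⟩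
  · intro p hp q hq r hr qr a pq pr b hqr ha hpq hpr hb
    exact congrArg (· ∘ some) (hdist _ (mem_one hp) _ (mem_one hq) _ (mem_one hr) _ _ _ _ _
      hqr.extFun_one ha.extFun_one hpq.extFun_one hpr.extFun_one hb.extFun_one)
  · obtain ⟨hi, hs⟩ := hcompl _ (mem_one hp)
    rw [one_sub_extFun, sub_self] at hi hs
    exact ⟨hi.restrict zero_le_one le_rfl, hs.restrict le_rfl zero_le_one⟩

end Extension

theorem stmt_7_general {S : Type*} {P : Set (S → ℝ)}
    (h01 : ∀ p ∈ P, ∀ s, p s = 0 ∨ p s = 1)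
    (hnB : ¬IsBooleanAlg S P)
    {qbar : Option S → ℝ} (hq01 : ∀ x, qbar x = 0 ∨ qbar x = 1) :
    ¬IsBooleanAlg (Option S) (extSet P) ∧
    IsBooleanAlg (Option S) {f : Option S → ℝ | ∀ x, f x = 0 ∨ f x = 1} ∧
    extSet P ∪ {qbar} ⊆ {f : Option S → ℝ | ∀ x, f x = 0 ∨ f x = 1} :=
  ⟨fun hB => hnB (isBooleanAlg_of_extSet hB), isBooleanAlg_zeroOne (Option S),
    Set.union_subset (extSet_subset_zeroOne h01) (Set.singleton_subset_iff.2 hq01)⟩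

theorem stmt_7 {S : Type*} [Nonempty S] {P : Set (S → ℝ)} (hP : IsAlg S P)
    (h01 : ∀ p ∈ P, ∀ s, p s = 0 ∨ p s = 1)
    (hnB : ¬IsBooleanAlg S P)
    {qbar : Option S → ℝ} (hq01 : ∀ x, qbar x = 0 ∨ qbar x = 1)
    (hqn : qbar ∉ extSet P) :
    ¬IsBooleanAlg (Option S) (extSet P) ∧
    IsBooleanAlg (Option S) {f : Option S → ℝ | ∀ x, f x = 0 ∨ f x = 1} ∧
    extSet P ∪ {qbar} ⊆ {f : Option S → ℝ | ∀ x, f x = 0 ∨ f x = 1} :=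
  stmt_7_general h01 hnB hq01
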